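/- arXiv:1305.7003 — 2 statements merged into one kernel-verified Lean document; each statement's English description precedes it below -/
import Mathlib

section
/- For every u₀ ∈ Int(Dom(φ)) there exist constants r₀ > 0 and M₀ > 0 such that r₀ |∇φ_ε(x)| ≤ ⟨∇φ_ε(x), x − u₀⟩ + M₀ for every ε > 0 and every x ∈ ℝᵈ. -/
/-!
The envelope `φ_ε` is convex (an infimal convolution of convex functions), nonnegative, and
bounded above by `φ`. A convex function is bounded above near every interior point of its
domain, so `φ_ε ≤ C` on some ball `B(u₀, r)`, uniformly in `ε`. Testing the gradient inequality
`φ_ε y ≥ φ_ε x + ⟨∇φ_ε x, y - x⟩` at `y = u₀ + r ∇φ_ε x / |∇φ_ε x|` gives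
`r |∇φ_ε x| ≤ ⟨∇φ_ε x, x - u₀⟩ + C`.
-/

open Set Metric
open scoped RealInnerProductSpace

variable {E : Type*}

def ConvexEReal [AddCommGroup E] [Module ℝ E] (φ : E → EReal) : Prop :=
  ∀ x y : E, ∀ a b : ℝ, 0 ≤ a → 0 ≤ b → a + b = 1 →
    φ (a • x + b • y) ≤ (a : EReal) * φ x + (b : EReal) * φ y

namespace ConvexEReal

section Module

variable [AddCommGroup E] [Module ℝ E] {φ : E → EReal}

lemma le_coe_combo_toReal (hbot : ∀ x, φ x ≠ ⊥) (hφ : ConvexEReal φ) {x y : E}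
    (hx : φ x ≠ ⊤) (hy : φ y ≠ ⊤) {a b : ℝ} (ha : 0 ≤ a) (hb : 0 ≤ b) (hab : a + b = 1) :
    φ (a • x + b • y) ≤ ((a * (φ x).toReal + b * (φ y).toReal : ℝ) : EReal) := by
  have h := hφ x y a b ha hb hab
  rwa [← EReal.coe_toReal hx (hbot x), ← EReal.coe_toReal hy (hbot y), ← EReal.coe_mul,
    ← EReal.coe_mul, ← EReal.coe_add] at h

lemma convex_setOf_ne_top (hbot : ∀ x, φ x ≠ ⊥) (hφ : ConvexEReal φ) :
    Convex ℝ {w | φ w ≠ ⊤} := fun _ hx _ hy _ _ ha hb hab =>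
  ne_top_of_le_ne_top (EReal.coe_ne_top _) (hφ.le_coe_combo_toReal hbot hx hy ha hb hab)

lemma convexOn_toReal (hbot : ∀ x, φ x ≠ ⊥) (hφ : ConvexEReal φ) :
    ConvexOn ℝ {w | φ w ≠ ⊤} fun w => (φ w).toReal := by
  refine ⟨hφ.convex_setOf_ne_top hbot, fun x hx y hy a b ha hb hab => ?_⟩
  have h := hφ.le_coe_combo_toReal hbot hx hy ha hb hab
  rw [← EReal.coe_toReal (hφ.convex_setOf_ne_top hbot hx hy ha hb hab) (hbot _)] at h
  exact_mod_cast h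

end Module

lemma exists_forall_closedBall_le [NormedAddCommGroup E] [NormedSpace ℝ E]
    [FiniteDimensional ℝ E] {φ : E → EReal} (hbot : ∀ x, φ x ≠ ⊥) (hφ : ConvexEReal φ) {u₀ : E}
    (hu₀ : u₀ ∈ interior {w | φ w ≠ ⊤}) :
    ∃ r > 0, ∃ C : ℝ, ∀ y ∈ closedBall u₀ r, φ y ≤ C := by
  obtain ⟨r, hr, hball⟩ := nhds_basis_closedBall.mem_iff.1 (isOpen_interior.mem_nhds hu₀)
  obtain ⟨C, hC⟩ := (isCompact_closedBall u₀ r).bddAbove_image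
    ((hφ.convexOn_toReal hbot).continuousOn_interior.mono hball)
  refine ⟨r, hr, C, fun y hy => ?_⟩
  rw [← EReal.coe_toReal (interior_subset (hball hy)) (hbot y), EReal.coe_le_coe_iff]
  exact hC (mem_image_of_mem _ hy)

end ConvexEReal

section InfimalConvolution

variable [AddCommGroup E]

noncomputable def infConv (k : E → ℝ) (φ : E → EReal) (x : E) : EReal :=
  ⨅ v, ((k (v - x) : ℝ) : EReal) + φ v

variable {φ : E → EReal} {k g : E → ℝ}

lemma le_add_toReal_of_eq_infConv (hg : ∀ x, (g x : EReal) = infConv k φ x)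
    (hbot : ∀ x, φ x ≠ ⊥) (x : E) {v : E} (hv : φ v ≠ ⊤) : g x ≤ k (v - x) + (φ v).toReal := by
  have h : (g x : EReal) ≤ (k (v - x) : EReal) + φ v := hg x ▸ iInf_le _ v
  rwa [← EReal.coe_toReal hv (hbot v), ← EReal.coe_add, EReal.coe_le_coe_iff] at h

lemma exists_add_toReal_lt_of_eq_infConv
    (hg : ∀ x, (g x : EReal) = infConv k φ x)
    (hbot : ∀ x, φ x ≠ ⊥) (x : E) {t : ℝ} (ht : g x < t) :
    ∃ v, φ v ≠ ⊤ ∧ k (v - x) + (φ v).toReal < t := by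
  obtain ⟨v, hv⟩ := iInf_lt_iff.1 (hg x ▸ EReal.coe_lt_coe_iff.2 ht)
  have hv_top : φ v ≠ ⊤ := by
    rintro h
    rw [h, EReal.add_top_of_ne_bot (EReal.coe_ne_bot _)] at hv
    exact not_top_lt hv
  rw [← EReal.coe_toReal hv_top (hbot v), ← EReal.coe_add, EReal.coe_lt_coe_iff] at hv
  exact ⟨v, hv_top, hv⟩

lemma convexOn_of_eq_infConv [Module ℝ E] (hg : ∀ x, (g x : EReal) = infConv k φ x)
    (hbot : ∀ x, φ x ≠ ⊥) (hφ : ConvexEReal φ) (hk : ConvexOn ℝ univ k) :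
    ConvexOn ℝ univ g := by
  refine ⟨convex_univ, fun x _ y _ a b ha hb hab => ?_⟩
  simp only [smul_eq_mul]
  refine le_of_forall_pos_le_add fun δ hδ => ?_
  obtain ⟨v, hv, hvx⟩ := exists_add_toReal_lt_of_eq_infConv hg hbot x (lt_add_of_pos_right _ hδ)
  obtain ⟨w, hw, hwy⟩ := exists_add_toReal_lt_of_eq_infConv hg hbot y (lt_add_of_pos_right _ hδ)
  have hk_combo : k (a • v + b • w - (a • x + b • y)) ≤ a * k (v - x) + b * k (w - y) := by
    rw [show a • v + b • w - (a • x + b • y) = a • (v - x) + b • (w - y) by module]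
    exact hk.2 (mem_univ _) (mem_univ _) ha hb hab
  have hφ_combo := (hφ.convexOn_toReal hbot).2 hv hw ha hb hab
  simp only [smul_eq_mul] at hφ_combo
  calc g (a • x + b • y)
      ≤ k (a • v + b • w - (a • x + b • y)) + (φ (a • v + b • w)).toReal :=
        le_add_toReal_of_eq_infConv hg hbot _ (hφ.convex_setOf_ne_top hbot hv hw ha hb hab)
    _ ≤ a * (k (v - x) + (φ v).toReal) + b * (k (w - y) + (φ w).toReal) := by
        linarith
    _ ≤ a * (g x + δ) + b * (g y + δ) := by gcongr
    _ = a * g x + b * g y + δ := by linear_combination δ * hab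

lemma coe_le_of_eq_infConv (hg : ∀ x, (g x : EReal) = infConv k φ x)
    (hk : k 0 = 0) (x : E) : (g x : EReal) ≤ φ x := by
  rw [hg x]
  exact (iInf_le (fun v => ((k (v - x) : ℝ) : EReal) + φ v) x).trans (by simp [hk])

lemma nonneg_of_eq_infConv (hg : ∀ x, (g x : EReal) = infConv k φ x)
    (hk : ∀ z, 0 ≤ k z) (hφ : ∀ x, 0 ≤ φ x) (x : E) : 0 ≤ g x := by
  have h : (0 : EReal) ≤ g x :=
    hg x ▸ le_iInf fun v => add_nonneg (EReal.coe_nonneg.2 (hk _)) (hφ v)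
  exact_mod_cast h

end InfimalConvolution

lemma convexOn_univ_norm_sq_div [NormedAddCommGroup E] [NormedSpace ℝ E] {c : ℝ} (hc : 0 ≤ c) :
    ConvexOn ℝ univ fun z : E => ‖z‖ ^ 2 / c := by
  refine (((convexOn_norm (E := E) convex_univ).pow (fun z _ => norm_nonneg z) 2).smul
    (inv_nonneg.2 hc)).congr fun z _ => ?_
  simp [div_eq_inv_mul]

lemma ConvexOn.le_sub_of_hasFDerivAt [NormedAddCommGroup E] [NormedSpace ℝ E] {f : E → ℝ}
    {f' : E →L[ℝ] ℝ} {s : Set E} (hf : ConvexOn ℝ s f) {x y : E} (hx : x ∈ s) (hy : y ∈ s)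
    (hf' : HasFDerivAt f f' x) : f' (y - x) ≤ f y - f x := by
  set ℓ : ℝ →ᵃ[ℝ] E := AffineMap.lineMap x y
  have hderiv : HasDerivAt (f ∘ ℓ) (f' (y - x)) 0 := by
    have hf'' : HasFDerivAt f f' (ℓ 0) := by simpa [ℓ] using hf'
    exact hf''.comp_hasDerivAt 0 AffineMap.hasDerivAt_lineMap
  have := (hf.comp_affineMap ℓ).le_slope_of_hasDerivAt (by simpa [ℓ] using hx)
    (by simpa [ℓ] using hy) one_pos hderiv
  simpa [slope_def_field, ℓ] using this

lemma exists_norm_le_inner_eq [NormedAddCommGroup E] [InnerProductSpace ℝ E] (p : E) {r : ℝ}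
    (hr : 0 ≤ r) : ∃ z : E, ‖z‖ ≤ r ∧ ⟪p, z⟫ = r * ‖p‖ := by
  rcases eq_or_ne p 0 with rfl | hp
  · exact ⟨0, by simpa using hr, by simp⟩
  · have hp' : 0 < ‖p‖ := norm_pos_iff.2 hp
    refine ⟨(r / ‖p‖) • p, ?_, ?_⟩
    · rw [norm_smul, Real.norm_of_nonneg (by positivity), div_mul_cancel₀ _ hp'.ne']
    · rw [real_inner_smul_right, real_inner_self_eq_norm_sq]
      field_simp

section Gradient

variable [NormedAddCommGroup E] [InnerProductSpace ℝ E] [CompleteSpace E] {g : E → ℝ}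

lemma ConvexOn.inner_gradient_le_sub {s : Set E} (hg : ConvexOn ℝ s g) {x y : E} (hx : x ∈ s)
    (hy : y ∈ s) (hdiff : DifferentiableAt ℝ g x) : ⟪gradient g x, y - x⟫ ≤ g y - g x := by
  simpa using hg.le_sub_of_hasFDerivAt hx hy (hasGradientAt_iff_hasFDerivAt.1 hdiff.hasGradientAt)

lemma ConvexOn.mul_norm_gradient_le (hg : ConvexOn ℝ univ g) {x : E}
    (hdiff : DifferentiableAt ℝ g x) {u₀ : E} {r C : ℝ} (hr : 0 ≤ r)
    (hC : ∀ y ∈ closedBall u₀ r, g y ≤ C) :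
    r * ‖gradient g x‖ ≤ ⟪gradient g x, x - u₀⟫ + (C - g x) := by
  obtain ⟨z, hz, hpz⟩ := exists_norm_le_inner_eq (gradient g x) hr
  have hy : u₀ + z ∈ closedBall u₀ r := by simpa [dist_eq_norm] using hz
  have hgrad := hg.inner_gradient_le_sub (mem_univ x) (mem_univ (u₀ + z)) hdiff
  rw [show u₀ + z - x = z - (x - u₀) by abel, inner_sub_right, hpz] at hgrad
  linarith [hC _ hy]

end Gradient

theorem moreau_yosida_gradient_interior_bound_general {d : ℕ}
    (φ : EuclideanSpace ℝ (Fin d) → EReal)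
    (hbot : ∀ x, φ x ≠ ⊥)
    (hconv : ∀ x y : EuclideanSpace ℝ (Fin d), ∀ a b : ℝ,
      0 ≤ a → 0 ≤ b → a + b = 1 →
      φ (a • x + b • y) ≤ (a : EReal) * φ x + (b : EReal) * φ y)
    (hpos : ∀ x, (0 : EReal) ≤ φ x)
    (g : ℝ → EuclideanSpace ℝ (Fin d) → ℝ)
    (hg : ∀ ε : ℝ, 0 < ε → ∀ x, (g ε x : EReal) =
      ⨅ v : EuclideanSpace ℝ (Fin d),
        (((‖v - x‖ ^ 2 / (2 * ε)) : ℝ) : EReal) + φ v)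
    (hg1 : ∀ ε : ℝ, 0 < ε → ContDiff ℝ 1 (g ε))
    (u₀ : EuclideanSpace ℝ (Fin d))
    (hu₀ : u₀ ∈ interior {w | φ w ≠ ⊤}) :
    ∃ r₀ > (0 : ℝ), ∃ M₀ > (0 : ℝ), ∀ ε : ℝ, 0 < ε →
      ∀ x : EuclideanSpace ℝ (Fin d),
        r₀ * ‖gradient (g ε) x‖ ≤ ⟪gradient (g ε) x, x - u₀⟫ + M₀ := by
  obtain ⟨r, hr, C, hC⟩ := ConvexEReal.exists_forall_closedBall_le hbot hconv hu₀
  refine ⟨r, hr, max C 1, lt_max_of_lt_right one_pos, fun ε hε x => ?_⟩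
  set k : EuclideanSpace ℝ (Fin d) → ℝ := fun z => ‖z‖ ^ 2 / (2 * ε) with hk
  have hgε : ∀ x, (g ε x : EReal) = infConv k φ x := hg ε hε
  have hkernel : ConvexOn ℝ univ k := convexOn_univ_norm_sq_div (by positivity)
  have hgε_le : ∀ y ∈ closedBall u₀ r, g ε y ≤ C := fun y hy => by
    exact_mod_cast (coe_le_of_eq_infConv hgε (by simp [hk]) y).trans (hC y hy)
  have hgε_nonneg : 0 ≤ g ε x := nonneg_of_eq_infConv hgε (fun _ => by positivity) hpos x
  calc r * ‖gradient (g ε) x‖ ≤ ⟪gradient (g ε) x, x - u₀⟫ + (C - g ε x) :=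
        (convexOn_of_eq_infConv hgε hbot hconv hkernel).mul_norm_gradient_le
          ((hg1 ε hε).differentiable one_ne_zero x) hr.le hgε_le
    _ ≤ ⟪gradient (g ε) x, x - u₀⟫ + max C 1 := by linarith [le_max_left C 1]

/-- For every u₀ ∈ Int(Dom(φ)) there exist constants r₀ > 0 and M₀ > 0
such that r₀|∇φ_ε(x)| ≤ ⟨∇φ_ε(x), x − u₀⟩ + M₀ for every ε > 0 and every x ∈ ℝᵈ.
Here `g ε` denotes the real-valued C¹ Moreau–Yosida regularization φ_ε. -/
theorem moreau_yosida_gradient_interior_bound {d : ℕ} (hd : 0 < d)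
    (φ : EuclideanSpace ℝ (Fin d) → EReal)
    (hbot : ∀ x, φ x ≠ ⊥)
    (hconv : ∀ x y : EuclideanSpace ℝ (Fin d), ∀ a b : ℝ,
      0 ≤ a → 0 ≤ b → a + b = 1 →
      φ (a • x + b • y) ≤ (a : EReal) * φ x + (b : EReal) * φ y)
    (hlsc : LowerSemicontinuous φ)
    (hzero : φ 0 = 0)
    (hpos : ∀ x, (0 : EReal) ≤ φ x)
    (h0int : (0 : EuclideanSpace ℝ (Fin d)) ∈ interior {w | φ w ≠ ⊤})
    (g : ℝ → EuclideanSpace ℝ (Fin d) → ℝ)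
    (hg : ∀ ε : ℝ, 0 < ε → ∀ x, (g ε x : EReal) =
      ⨅ v : EuclideanSpace ℝ (Fin d),
        (((‖v - x‖ ^ 2 / (2 * ε)) : ℝ) : EReal) + φ v)
    (hg1 : ∀ ε : ℝ, 0 < ε → ContDiff ℝ 1 (g ε))
    (u₀ : EuclideanSpace ℝ (Fin d))
    (hu₀ : u₀ ∈ interior {w | φ w ≠ ⊤}) :
    ∃ r₀ > (0 : ℝ), ∃ M₀ > (0 : ℝ), ∀ ε : ℝ, 0 < ε →
      ∀ x : EuclideanSpace ℝ (Fin d),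
        r₀ * ‖gradient (g ε) x‖ ≤ ⟪gradient (g ε) x, x - u₀⟫ + M₀ :=
  moreau_yosida_gradient_interior_bound_general φ hbot hconv hpos g hg hg1 u₀ hu₀
end

section
/- Let A : ℝ → Set ℝ be an operator whose graph G := {(x, y) : y ∈ A(x)} is nonempty and maximal monotone, i.e. (y − y')(x − x') ≥ 0 for all (x, y), (x', y') ∈ G, and G is not properly contained in the graph of any other monotone operator. Then there exists a proper, convex, lower semicontinuous function ψ : ℝ → (−∞, +∞] such that A(x) = ∂ψ(x) for every x ∈ ℝ. -/
/-!
Rockafellar's construction: if the graph `G` is cyclically monotone and `(x₀, y₀) ∈ G`, then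
`ψ z = sup (⟪y₀, x₁ - x₀⟫ + ⟪y₁, x₂ - x₁⟫ + ⋯ + ⟪yₙ, z - xₙ⟫)` over all chains `(xᵢ, yᵢ)` in `G`
is a supremum of continuous affine functions, hence convex and lower semicontinuous; it is
`> -∞` (take the empty chain), `ψ x₀ ≤ 0` by cyclic monotonicity, and appending `(x, y) ∈ G` to
a chain shows `y ∈ ∂ψ x`. Subdifferentials are monotone, so maximality of `G` forces `G = ∂ψ`.

On the line every monotone graph is cyclically monotone: the finitely many points of a cycle
lie on the filled-in graph of one monotone step function `φ`, each term `yᵢ (xᵢ₊₁ - xᵢ)` is at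
most `∫ φ` over `[xᵢ, xᵢ₊₁]`, and these integrals add up to `∫ φ` over `[x₀, x₀]`, which is `0`.
-/

open Set

section Subdifferential

variable {E : Type*} [NormedAddCommGroup E] [InnerProductSpace ℝ E]

def subdiff (ψ : E → EReal) (x : E) : Set E :=
  {y | ∀ z, ((inner ℝ y (z - x) : ℝ) : EReal) + ψ x ≤ ψ z}

variable {ψ : E → EReal}

lemma ne_top_of_mem_subdiff {x x₁ y : E} (hy : y ∈ subdiff ψ x) (h₁ : ψ x₁ ≠ ⊤) : ψ x ≠ ⊤ :=
  fun h => h₁ (top_le_iff.mp (by simpa [h] using hy x₁))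

lemma subdiff_monotone (hbot : ∀ x, ψ x ≠ ⊥) (htop : ∃ x, ψ x ≠ ⊤) {x x' y y' : E}
    (hy : y ∈ subdiff ψ x) (hy' : y' ∈ subdiff ψ x') : 0 ≤ inner ℝ (y - y') (x - x') := by
  obtain ⟨x₁, h₁⟩ := htop
  obtain ⟨u, hu⟩ : ∃ u : ℝ, ψ x = u :=
    ⟨_, (EReal.coe_toReal (ne_top_of_mem_subdiff hy h₁) (hbot x)).symm⟩
  obtain ⟨u', hu'⟩ : ∃ u : ℝ, ψ x' = u :=
    ⟨_, (EReal.coe_toReal (ne_top_of_mem_subdiff hy' h₁) (hbot x')).symm⟩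
  have h := hy x'
  have h' := hy' x
  rw [hu, hu'] at h h'
  norm_cast at h h'
  have : inner ℝ (y - y') (x - x') = -inner ℝ y (x' - x) - inner ℝ y' (x - x') := by
    simp only [inner_sub_left, inner_sub_right]; ring
  linarith

end Subdifferential

section Rockafellar

variable {E : Type*} [NormedAddCommGroup E] [InnerProductSpace ℝ E]

/-- `chainSum [(x₀, y₀), …, (xₙ, yₙ)] z = ∑ᵢ ⟪yᵢ, xᵢ₊₁ - xᵢ⟫` with `xₙ₊₁ = z`. -/
def chainSum : List (E × E) → E → ℝ
  | [], _ => 0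
  | [p], z => inner ℝ p.2 (z - p.1)
  | p :: q :: l, z => inner ℝ p.2 (q.1 - p.1) + chainSum (q :: l) z

lemma chainSum_append_singleton (l : List (E × E)) (q : E × E) (z : E) :
    chainSum (l ++ [q]) z = chainSum l q.1 + inner ℝ q.2 (z - q.1) := by
  induction l with
  | nil => simp [chainSum]
  | cons p l ih =>
    cases l with
    | nil => simp [chainSum]
    | cons r l => simp only [List.cons_append, chainSum] at ih ⊢; rw [ih]; ring

lemma chainSum_affine_combination (l : List (E × E)) {x y : E} {a b : ℝ} (hab : a + b = 1) :
    chainSum l (a • x + b • y) = a * chainSum l x + b * chainSum l y := by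
  induction l with
  | nil => simp [chainSum]
  | cons p l ih =>
    cases l with
    | nil =>
      have : a • x + b • y - p.1 = a • (x - p.1) + b • (y - p.1) := by
        linear_combination (norm := module) hab • p.1
      simp only [chainSum, this, inner_add_right, inner_smul_right]
    | cons q l =>
      simp only [chainSum] at ih ⊢
      rw [ih]
      linear_combination -(inner ℝ p.2 (q.1 - p.1)) * hab

lemma chainSum_convexOn (l : List (E × E)) : ConvexOn ℝ univ (chainSum l) :=
  ⟨convex_univ, fun _ _ _ _ _ _ _ _ hab => (chainSum_affine_combination l hab).le⟩

lemma continuous_chainSum (l : List (E × E)) : Continuous (chainSum l) := by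
  induction l with
  | nil => exact continuous_const
  | cons p l ih =>
    cases l with
    | nil => simp only [chainSum]; fun_prop
    | cons q l => simp only [chainSum] at ih ⊢; fun_prop

def CyclicallyMonotone (G : Set (E × E)) : Prop :=
  ∀ p ∈ G, ∀ l : List (E × E), (∀ q ∈ l, q ∈ G) → chainSum (p :: l) p.1 ≤ 0

noncomputable def rockafellarFn (G : Set (E × E)) (p₀ : E × E) (z : E) : EReal :=
  ⨆ l : {l : List (E × E) // ∀ q ∈ l, q ∈ G}, (chainSum (p₀ :: l.1) z : EReal)

lemma EReal.iSup_coe_convex_combo_le {ι : Type*} {f : ι → E → ℝ}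
    (hf : ∀ i, ConvexOn ℝ univ (f i)) {x y : E} {a b : ℝ} (ha : 0 ≤ a) (hb : 0 ≤ b)
    (hab : a + b = 1) :
    ⨆ i, (f i (a • x + b • y) : EReal) ≤
      (a : EReal) * (⨆ i, (f i x : EReal)) + (b : EReal) * ⨆ i, (f i y : EReal) := by
  refine iSup_le fun i => ?_
  calc (f i (a • x + b • y) : EReal) ≤ ((a * f i x + b * f i y : ℝ) : EReal) :=
        EReal.coe_le_coe_iff.mpr ((hf i).2 trivial trivial ha hb hab)
    _ = (a : EReal) * (f i x : EReal) + (b : EReal) * (f i y : EReal) := by norm_cast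
    _ ≤ _ := by
      gcongr
      · exact le_iSup (fun i => (f i x : EReal)) i
      · exact le_iSup (fun i => (f i y : EReal)) i

variable {G : Set (E × E)} {p₀ : E × E}

lemma chainSum_le_rockafellarFn {l : List (E × E)} (hl : ∀ q ∈ l, q ∈ G) (z : E) :
    (chainSum (p₀ :: l) z : EReal) ≤ rockafellarFn G p₀ z :=
  le_iSup (fun l : {l : List (E × E) // ∀ q ∈ l, q ∈ G} => (chainSum (p₀ :: l.1) z : EReal))
    ⟨l, hl⟩

lemma rockafellarFn_ne_bot (z : E) : rockafellarFn G p₀ z ≠ ⊥ :=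
  ne_bot_of_le_ne_bot (EReal.coe_ne_bot _) (chainSum_le_rockafellarFn (l := []) (by simp) z)

lemma rockafellarFn_base_ne_top (hG : CyclicallyMonotone G) (hp₀ : p₀ ∈ G) :
    rockafellarFn G p₀ p₀.1 ≠ ⊤ := by
  refine ne_top_of_le_ne_top (EReal.coe_ne_top 0) (iSup_le fun l => ?_)
  exact_mod_cast hG p₀ hp₀ l.1 l.2

lemma rockafellarFn_convex {x y : E} {a b : ℝ} (ha : 0 ≤ a) (hb : 0 ≤ b) (hab : a + b = 1) :
    rockafellarFn G p₀ (a • x + b • y) ≤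
      (a : EReal) * rockafellarFn G p₀ x + (b : EReal) * rockafellarFn G p₀ y :=
  EReal.iSup_coe_convex_combo_le (fun _ => chainSum_convexOn _) ha hb hab

lemma lowerSemicontinuous_rockafellarFn : LowerSemicontinuous (rockafellarFn G p₀) :=
  lowerSemicontinuous_iSup fun _ =>
    (continuous_coe_real_ereal.comp (continuous_chainSum _)).lowerSemicontinuous

lemma mem_subdiff_rockafellarFn {q : E × E} (hq : q ∈ G) :
    q.2 ∈ subdiff (rockafellarFn G p₀) q.1 := by
  intro z
  rw [add_comm, ← EReal.le_sub_iff_add_le (.inl (EReal.coe_ne_bot _)) (.inl (EReal.coe_ne_top _))]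
  refine iSup_le fun l => ?_
  rw [EReal.le_sub_iff_add_le (.inl (EReal.coe_ne_bot _)) (.inl (EReal.coe_ne_top _))]
  have hl : ∀ r ∈ l.1 ++ [q], r ∈ G := by
    simpa [or_imp, forall_and] using And.intro l.2 hq
  have := chainSum_le_rockafellarFn (p₀ := p₀) hl z
  rwa [← List.cons_append, chainSum_append_singleton, EReal.coe_add] at this

end Rockafellar

lemma Monotone.mul_sub_le_intervalIntegral {φ : ℝ → ℝ} (hφ : Monotone φ) {x y : ℝ}
    (hlt : ∀ t < x, φ t ≤ y) (hgt : ∀ t > x, y ≤ φ t) (b : ℝ) :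
    y * (b - x) ≤ ∫ t in x..b, φ t := by
  rcases le_total x b with hxb | hbx
  · calc y * (b - x) = ∫ _ in x..b, y := by simp [mul_comm]
      _ ≤ ∫ t in x..b, φ t := intervalIntegral.integral_mono_on_of_le_Ioo hxb
          intervalIntegrable_const hφ.intervalIntegrable fun t ht => hgt t ht.1
  · have : ∫ t in b..x, φ t ≤ ∫ _ in b..x, y := intervalIntegral.integral_mono_on_of_le_Ioo hbx
      hφ.intervalIntegrable intervalIntegrable_const fun t ht => hlt t ht.2
    rw [intervalIntegral.integral_symm]
    simp only [intervalIntegral.integral_const, smul_eq_mul] at this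
    linarith

lemma chainSum_le_intervalIntegral {φ : ℝ → ℝ} (hφ : Monotone φ) {p : ℝ × ℝ}
    {l : List (ℝ × ℝ)} (hthrough : ∀ q ∈ p :: l, (∀ t < q.1, φ t ≤ q.2) ∧ ∀ t > q.1, q.2 ≤ φ t)
    (z : ℝ) : chainSum (p :: l) z ≤ ∫ t in p.1..z, φ t := by
  induction l generalizing p with
  | nil =>
    obtain ⟨hlt, hgt⟩ := hthrough p List.mem_cons_self
    rw [chainSum, Real.inner_apply]
    exact hφ.mul_sub_le_intervalIntegral hlt hgt z
  | cons q l ih =>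
    obtain ⟨hlt, hgt⟩ := hthrough p List.mem_cons_self
    rw [chainSum, Real.inner_apply, ← intervalIntegral.integral_add_adjacent_intervals
      hφ.intervalIntegrable hφ.intervalIntegrable (b := q.1)]
    exact add_le_add (hφ.mul_sub_le_intervalIntegral hlt hgt _)
      (ih fun r hr => hthrough r (List.mem_cons_of_mem _ hr))

lemma exists_monotone_through {S : Finset (ℝ × ℝ)} (hS : S.Nonempty)
    (hmono : ∀ p ∈ S, ∀ q ∈ S, 0 ≤ (p.2 - q.2) * (p.1 - q.1)) :
    ∃ φ : ℝ → ℝ, Monotone φ ∧ ∀ q ∈ S, (∀ t < q.1, φ t ≤ q.2) ∧ ∀ t > q.1, q.2 ≤ φ t := by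
  set m := S.inf' hS Prod.snd
  have hm : ∀ q ∈ S, m ≤ q.2 := fun q hq => S.inf'_le Prod.snd hq
  refine ⟨fun t => S.sup' hS fun r => if r.1 ≤ t then r.2 else m, ?_, fun q hq => ⟨?_, ?_⟩⟩
  · intro s t hst
    refine Finset.sup'_le _ _ fun r hr => Finset.le_sup'_of_le _ hr ?_
    split_ifs <;> first | exact le_rfl | exact hm r hr | (exfalso; linarith)
  · intro t ht
    refine Finset.sup'_le _ _ fun r hr => ?_
    split_ifs with hrt
    · nlinarith [hmono r hr q hq]
    · exact hm q hq
  · intro t ht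
    exact Finset.le_sup'_of_le _ hq (by simp [ht.le])

theorem cyclicallyMonotone_of_monotone {G : Set (ℝ × ℝ)}
    (hG : ∀ p ∈ G, ∀ q ∈ G, 0 ≤ (p.2 - q.2) * (p.1 - q.1)) : CyclicallyMonotone G := by
  classical
  intro p hp l hl
  have hpl : ∀ q ∈ p :: l, q ∈ G := List.forall_mem_cons.mpr ⟨hp, hl⟩
  obtain ⟨φ, hφ, hthrough⟩ := exists_monotone_through (S := (p :: l).toFinset) ⟨p, by simp⟩
    fun q hq r hr => hG q (hpl q (List.mem_toFinset.mp hq)) r (hpl r (List.mem_toFinset.mp hr))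
  simpa using
    chainSum_le_intervalIntegral hφ (fun q hq => hthrough q (List.mem_toFinset.mpr hq)) p.1

/-- Every maximal monotone set-valued operator A : ℝ → Set ℝ (with
nonempty graph) is the subdifferential of a proper, convex, lower semicontinuous
function ψ : ℝ → (−∞, +∞]. -/
theorem maximal_monotone_is_subdifferential (A : ℝ → Set ℝ)
    (hne : ∃ x y, y ∈ A x)
    (hmono : ∀ x x' y y' : ℝ, y ∈ A x → y' ∈ A x' → 0 ≤ (y - y') * (x - x'))
    (hmax : ∀ G' : Set (ℝ × ℝ),
      {p : ℝ × ℝ | p.2 ∈ A p.1} ⊆ G' →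
      (∀ p ∈ G', ∀ q ∈ G', 0 ≤ (p.2 - q.2) * (p.1 - q.1)) →
      G' = {p : ℝ × ℝ | p.2 ∈ A p.1}) :
    ∃ ψ : ℝ → EReal,
      (∀ x, ψ x ≠ ⊥) ∧
      (∃ x, ψ x ≠ ⊤) ∧
      (∀ x y a b : ℝ, 0 ≤ a → 0 ≤ b → a + b = 1 →
        ψ (a * x + b * y) ≤ (a : EReal) * ψ x + (b : EReal) * ψ y) ∧
      LowerSemicontinuous ψ ∧
      (∀ x : ℝ, A x = {y : ℝ | ∀ z : ℝ, ((y * (z - x) : ℝ) : EReal) + ψ x ≤ ψ z}) := by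
  obtain ⟨x₀, y₀, h₀⟩ := hne
  set G : Set (ℝ × ℝ) := {p | p.2 ∈ A p.1}
  have hG : CyclicallyMonotone G :=
    cyclicallyMonotone_of_monotone fun p hp q hq => hmono _ _ _ _ hp hq
  set ψ := rockafellarFn G (x₀, y₀)
  have htop : ψ x₀ ≠ ⊤ := rockafellarFn_base_ne_top hG h₀
  have hsubdiff : {p : ℝ × ℝ | p.2 ∈ subdiff ψ p.1} = G := by
    refine hmax _ (fun p hp => mem_subdiff_rockafellarFn hp) fun p hp q hq => ?_
    simpa only [Real.inner_apply] using
      subdiff_monotone rockafellarFn_ne_bot ⟨x₀, htop⟩ hp hq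
  refine ⟨ψ, rockafellarFn_ne_bot, ⟨x₀, htop⟩,
    fun x y a b ha hb hab => rockafellarFn_convex ha hb hab,
    lowerSemicontinuous_rockafellarFn, fun x => ?_⟩
  ext y
  change (x, y) ∈ G ↔ _
  rw [← hsubdiff]
  simp only [subdiff, Set.mem_ofPred_eq, Real.inner_apply]
end
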